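/- Let R be a reduced divided commutative ring and I a proper ideal of R. Then I is a weakly 1-absorbing primary ideal of R if and only if I is a weakly primary ideal of R. -/

import Mathlib

open Ideal

def IsWeakly1AbsorbingPrimary {R : Type*} [CommRing R] (I : Ideal R) : Prop :=
  I ≠ ⊤ ∧ ∀ a b c : R, ¬IsUnit a → ¬IsUnit b → ¬IsUnit c →
    a * b * c ∈ I → a * b * c ≠ 0 → a * b ∈ I ∨ c ∈ I.radical

def IsWeaklyPrimary {R : Type*} [CommRing R] (I : Ideal R) : Prop :=
  I ≠ ⊤ ∧ ∀ a b : R, a * b ∈ I → a * b ≠ 0 → a ∈ I ∨ b ∈ I.radical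

def IsWeaklyPrime {R : Type*} [CommRing R] (I : Ideal R) : Prop :=
  I ≠ ⊤ ∧ ∀ a b : R, a * b ∈ I → a * b ≠ 0 → a ∈ I ∨ b ∈ I

section

variable {R : Type*} [CommRing R]

theorem Ideal.exists_isPrime_notMem_of_notMem_radical {I : Ideal R} {x : R}
    (hx : x ∉ I.radical) : ∃ P : Ideal R, I ≤ P ∧ P.IsPrime ∧ x ∉ P := by
  simpa [radical_eq_sInf, Submodule.mem_sInf, and_assoc] using hx

theorem IsWeaklyPrimary.isWeakly1AbsorbingPrimary {I : Ideal R} (h : IsWeaklyPrimary I) :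
    IsWeakly1AbsorbingPrimary I :=
  ⟨h.1, fun a b c _ _ _ habc hne => h.2 (a * b) c habc hne⟩

/-- Given `0 ≠ ab ∈ I` with `b ∉ √I`, choose a prime `P ⊇ I` missing `b`; then `a ∈ P`, so
`a = cb` by dividedness, and the triple `(c, b, b)` forces `a = cb ∈ I`. -/
theorem IsWeakly1AbsorbingPrimary.isWeaklyPrimary
    (hdiv : ∀ P : Ideal R, P.IsPrime → ∀ x ∉ P, ∀ p ∈ P, x ∣ p)
    {I : Ideal R} (h : IsWeakly1AbsorbingPrimary I) : IsWeaklyPrimary I := by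
  refine ⟨h.1, fun a b hab hne => or_iff_not_imp_right.2 fun hb => ?_⟩
  by_cases hbu : IsUnit b
  · exact (mul_unit_mem_iff_mem I hbu).1 hab
  obtain ⟨P, hIP, hP, hbP⟩ := exists_isPrime_notMem_of_notMem_radical hb
  have haP : a ∈ P := (hP.mem_or_mem (hIP hab)).resolve_right hbP
  obtain ⟨c, rfl⟩ := hdiv P hP b hbP a haP
  have hcu : ¬IsUnit c := fun hcu => hbP ((mul_unit_mem_iff_mem P hcu).1 haP)
  have hcbb : c * b * b = b * c * b := by ring
  rw [← hcbb] at hab hne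
  simpa [mul_comm c b, hb] using h.2 c b b hcu hbu hbu hab hne

end

theorem stmt9_general {R : Type*} [CommRing R]
    (hdiv : ∀ P : Ideal R, P.IsPrime → ∀ x ∉ P, ∀ p ∈ P, x ∣ p)
    (I : Ideal R) :
    IsWeakly1AbsorbingPrimary I ↔ IsWeaklyPrimary I :=
  ⟨IsWeakly1AbsorbingPrimary.isWeaklyPrimary hdiv,
    IsWeaklyPrimary.isWeakly1AbsorbingPrimary⟩

theorem stmt9 {R : Type*} [CommRing R] [Nontrivial R] [IsReduced R]
    (hdiv : ∀ P : Ideal R, P.IsPrime → ∀ x ∉ P, ∀ p ∈ P, x ∣ p)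
    (I : Ideal R) (hI : I ≠ ⊤) :
    IsWeakly1AbsorbingPrimary I ↔ IsWeaklyPrimary I :=
  stmt9_general hdiv I
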